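/- arXiv:2010.09216 — 2 statements merged into one kernel-verified Lean document; each statement's English description precedes it below -/
import Mathlib

section
/- Let C and D be objects of a symmetric monoidal category M, each equipped with duality data (C⋆, η_C, ε_C) and (D⋆, η_D, ε_D) satisfying the zig-zag identities. If a morphism g : C⋆ ⟶ D⋆ respects a morphism f : C ⟶ D (i.e., (g ⊗ f) ≫ ε_D = ε_C and η_C ≫ (f ⊗ g) = η_D), then both f and g are isomorphisms. -/
/-!
Transposing along the two pairings turns `g` into a morphism `ᘁg : D ⟶ C` and `f` into
`fᘁ : Ds ⟶ Cs`. Whiskering into an evaluation or out of a coevaluation is injective (this is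
what the zig-zag identities say), so the evaluation condition cancels to `f ≫ ᘁg = 𝟙` and
`g ≫ fᘁ = 𝟙`, and the coevaluation condition to `ᘁg ≫ f = 𝟙` and `fᘁ ≫ g = 𝟙`.
-/

open CategoryTheory MonoidalCategory

namespace CategoryTheory.ExactPairing

variable {M : Type*} [Category M] [MonoidalCategory M]

theorem whiskerRight_comp_evaluation_injective (C Cs X : M) [ExactPairing C Cs] :
    Function.Injective fun h : X ⟶ Cs => h ▷ C ≫ ε_ C Cs := by
  let : HasRightDual C := ⟨Cs⟩
  have transpose (h : X ⟶ Cs) :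
      tensorRightHomEquiv X C Cs (𝟙_ M) (h ▷ C ≫ ε_ C Cs) = h ≫ (λ_ Cs).inv :=
    tensorRightHomEquiv_whiskerRight_comp_evaluation (X := C) h
  intro h k hhk
  have := congrArg (tensorRightHomEquiv X C Cs (𝟙_ M)) hhk
  rwa [transpose, transpose, cancel_mono] at this

theorem whiskerLeft_comp_evaluation_injective (C Cs X : M) [ExactPairing C Cs] :
    Function.Injective fun h : X ⟶ C => Cs ◁ h ≫ ε_ C Cs := by
  let : HasLeftDual Cs := ⟨C⟩
  have transpose (h : X ⟶ C) :
      tensorLeftHomEquiv X C Cs (𝟙_ M) (Cs ◁ h ≫ ε_ C Cs) = h ≫ (ρ_ C).inv :=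
    tensorLeftHomEquiv_whiskerLeft_comp_evaluation (Z := Cs) h
  intro h k hhk
  have := congrArg (tensorLeftHomEquiv X C Cs (𝟙_ M)) hhk
  rwa [transpose, transpose, cancel_mono] at this

theorem coevaluation_comp_whiskerRight_injective (C Cs X : M) [ExactPairing C Cs] :
    Function.Injective fun h : C ⟶ X => η_ C Cs ≫ h ▷ Cs := by
  intro h k hhk
  have := congrArg (tensorRightHomEquiv (𝟙_ M) C Cs X).symm hhk
  simp only [tensorRightHomEquiv_symm_coevaluation_comp_whiskerRight] at this
  exact (cancel_epi _).1 this

theorem coevaluation_comp_whiskerLeft_injective (C Cs X : M) [ExactPairing C Cs] :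
    Function.Injective fun h : Cs ⟶ X => η_ C Cs ≫ C ◁ h := by
  intro h k hhk
  have := congrArg (tensorLeftHomEquiv (𝟙_ M) C Cs X).symm hhk
  simp only [tensorLeftHomEquiv_symm_coevaluation_comp_whiskerLeft] at this
  exact (cancel_epi _).1 this

variable {C Cs D Ds : M} [ExactPairing C Cs] [ExactPairing D Ds]

theorem exists_rightMate (f : C ⟶ D) : ∃ f' : Ds ⟶ Cs,
    f' ▷ C ≫ ε_ C Cs = Ds ◁ f ≫ ε_ D Ds ∧ η_ D Ds ≫ D ◁ f' = η_ C Cs ≫ f ▷ Cs := by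
  let : HasRightDual C := ⟨Cs⟩
  let : HasRightDual D := ⟨Ds⟩
  exact ⟨fᘁ, rightAdjointMate_comp_evaluation f, coevaluation_comp_rightAdjointMate f⟩

theorem exists_leftMate (g : Cs ⟶ Ds) : ∃ g' : D ⟶ C,
    Cs ◁ g' ≫ ε_ C Cs = g ▷ D ≫ ε_ D Ds ∧ η_ D Ds ≫ g' ▷ Ds = η_ C Cs ≫ C ◁ g := by
  let : HasLeftDual Cs := ⟨C⟩
  let : HasLeftDual Ds := ⟨D⟩
  exact ⟨ᘁg, leftAdjointMate_comp_evaluation g, coevaluation_comp_leftAdjointMate g⟩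

def Respects (g : Cs ⟶ Ds) (f : C ⟶ D) : Prop :=
  (g ⊗ₘ f) ≫ ε_ D Ds = ε_ C Cs ∧ η_ C Cs ≫ (f ⊗ₘ g) = η_ D Ds

namespace Respects

variable {f : C ⟶ D} {g : Cs ⟶ Ds}

theorem isIso (h : Respects g f) : IsIso f := by
  obtain ⟨g', hε, hη⟩ := exists_leftMate (C := C) (D := D) g
  refine ⟨g', whiskerLeft_comp_evaluation_injective C Cs C ?_,
    coevaluation_comp_whiskerRight_injective D Ds D ?_⟩
  · dsimp only
    rw [whiskerLeft_comp, Category.assoc, hε, ← tensorHom_def'_assoc, h.1, whiskerLeft_id,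
      Category.id_comp]
  · dsimp only
    rw [comp_whiskerRight, reassoc_of% hη, ← tensorHom_def', h.2, id_whiskerRight,
      Category.comp_id]

theorem isIso_dual (h : Respects g f) : IsIso g := by
  obtain ⟨f', hε, hη⟩ := exists_rightMate (Cs := Cs) (Ds := Ds) f
  refine ⟨f', whiskerRight_comp_evaluation_injective C Cs Cs ?_,
    coevaluation_comp_whiskerLeft_injective D Ds Ds ?_⟩
  · dsimp only
    rw [comp_whiskerRight, Category.assoc, hε, ← MonoidalCategory.tensorHom_def_assoc, h.1,
      id_whiskerRight, Category.id_comp]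
  · dsimp only
    rw [whiskerLeft_comp, reassoc_of% hη, ← MonoidalCategory.tensorHom_def, h.2,
      whiskerLeft_id, Category.comp_id]

end Respects

end CategoryTheory.ExactPairing

theorem respects_implies_isos_general
    {M : Type*} [Category M] [MonoidalCategory M]
    (C Cs D Ds : M) [ExactPairing C Cs] [ExactPairing D Ds]
    (f : C ⟶ D) (g : Cs ⟶ Ds)
    (h₁ : (g ⊗ₘ f) ≫ ε_ D Ds = ε_ C Cs)
    (h₂ : η_ C Cs ≫ (f ⊗ₘ g) = η_ D Ds) :
    IsIso f ∧ IsIso g :=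
  ⟨ExactPairing.Respects.isIso ⟨h₁, h₂⟩, ExactPairing.Respects.isIso_dual ⟨h₁, h₂⟩⟩

theorem respects_implies_isos
    {M : Type*} [Category M] [MonoidalCategory M] [SymmetricCategory M]
    (C Cs D Ds : M) [ExactPairing C Cs] [ExactPairing D Ds]
    (f : C ⟶ D) (g : Cs ⟶ Ds)
    (h₁ : (g ⊗ₘ f) ≫ ε_ D Ds = ε_ C Cs)
    (h₂ : η_ C Cs ≫ (f ⊗ₘ g) = η_ D Ds) :
    IsIso f ∧ IsIso g :=
  respects_implies_isos_general C Cs D Ds f g h₁ h₂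
end

section
/- Let B be a compact closed symmetric monoidal category with a distinguished object U which is freely generated by U in the following sense: (existence) for every compact closed symmetric monoidal category C and every object c of C there exists a strong symmetric monoidal functor F : B ⥤ C with F(U) = c; (uniqueness) for any compact closed symmetric monoidal category C and strong symmetric monoidal functors F, G : B ⥤ C with F(U) = G(U), there exists a unique monoidal natural isomorphism α : F ⟹ G with α_U = 1_{F(U)}. Then for any compact closed symmetric monoidal category C, any strong symmetric monoidal functors F, G : B ⥤ C, and any isomorphism f : F(U) ⟶ G(U) in C, there exists a unique monoidal natural isomorphism α : F ⟹ G with α_U = f. -/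
/-!
Redefine `F` at the single object `U` to take the value `G(U)`, transporting its braided
structure along the objectwise isomorphism that is `f` at `U` and the identity elsewhere. The
new functor agrees with `G` at `U`, so the freeness hypothesis gives a monoidal isomorphism from
it to `G` that is the identity at `U`; precomposing with the transport isomorphism gives `α`.
Two solutions differ by a monoidal automorphism of `G` that is the identity at `U`, which the
same hypothesis forces to be the identity.
-/

open CategoryTheory MonoidalCategory

universe v₁ u₁ v₂ u₂

namespace CategoryTheory

variable {B : Type u₁} [Category.{v₁} B] {C : Type u₂} [Category.{v₂} C]

namespace Functor

section CopyObj

variable [MonoidalCategory B] [MonoidalCategory C] (F : B ⥤ C) (obj : B → C)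
  (e : ∀ X, F.obj X ≅ obj X)

instance copyObjMonoidal [F.Monoidal] : (F.copyObj obj e).Monoidal :=
  Monoidal.transport (F.isoCopyObj obj e)

instance isoCopyObj_hom_isMonoidal [F.Monoidal] :
    NatTrans.IsMonoidal (F.isoCopyObj obj e).hom :=
  Monoidal.natTransIsMonoidal_of_transport _

instance copyObjBraided [BraidedCategory B] [BraidedCategory C] [F.Braided] :
    (F.copyObj obj e).Braided :=
  { copyObjMonoidal F obj e with
    braided := (LaxBraided.ofNatIso (F.isoCopyObj obj e)).braided }

end CopyObj

section UpdateObj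

variable (F : B ⥤ C) (U : B) {Y : C} (f : F.obj U ≅ Y)

open Classical in
noncomputable def updateObjIso (X : B) : F.obj X ≅ Function.update F.obj U Y X :=
  if h : X = U then eqToIso (congrArg F.obj h) ≪≫ f ≪≫ eqToIso (by simp [h])
  else eqToIso (by simp [h])

noncomputable abbrev updateObj : B ⥤ C :=
  F.copyObj _ (F.updateObjIso U f)

lemma updateObj_obj_self : (F.updateObj U f).obj U = Y := by
  simp

lemma updateObjIso_hom_self :
    (F.updateObjIso U f U).hom = f.hom ≫ eqToHom (F.updateObj_obj_self U f).symm := by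
  simp [updateObjIso]
  rfl

end UpdateObj

end Functor

lemma NatTrans.eq_of_app_eq_of_isMonoidal_of_isIso
    [MonoidalCategory B] [MonoidalCategory C] {F G : B ⥤ C} [F.Monoidal] [G.Monoidal] (U : B)
    (hG : ∀ γ : G ⟶ G, IsMonoidal γ → IsIso γ → γ.app U = 𝟙 _ → γ = 𝟙 G)
    {α β : F ⟶ G} [IsMonoidal α] [IsIso α] [IsMonoidal β] [IsIso β]
    (h : α.app U = β.app U) :
    α = β := by
  have : IsMonoidal (asIso α).hom := ‹IsMonoidal α›
  have : IsMonoidal (inv α) := inferInstanceAs (IsMonoidal (asIso α).inv)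
  have hγ : inv α ≫ β = 𝟙 G := hG _ inferInstance inferInstance (by simp [← h])
  simpa using ((IsIso.inv_comp_eq α).mp hγ).symm

end CategoryTheory

theorem free_compact_closed_unique_monoidal_nat_iso_general
    {B : Type u₁} [Category.{v₁} B] [MonoidalCategory B] [SymmetricCategory B]
    (U : B)
    (huniq : ∀ (C : Type u₂) [Category.{v₂} C] [MonoidalCategory C] [SymmetricCategory C],
      (∀ X : C, ∃ Xd : C, Nonempty (ExactPairing X Xd)) →
      ∀ (F G : B ⥤ C) [F.Braided] [G.Braided] (h : F.obj U = G.obj U),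
        ∃! α : F ⟶ G, NatTrans.IsMonoidal α ∧ IsIso α ∧ α.app U = eqToHom h)
    (C : Type u₂) [Category.{v₂} C] [MonoidalCategory C] [SymmetricCategory C]
    (hC : ∀ X : C, ∃ Xd : C, Nonempty (ExactPairing X Xd))
    (F G : B ⥤ C) [F.Braided] [G.Braided] (f : F.obj U ≅ G.obj U) :
    ∃! α : F ⟶ G, NatTrans.IsMonoidal α ∧ IsIso α ∧ α.app U = f.hom := by
  have hG : ∀ γ : G ⟶ G, NatTrans.IsMonoidal γ → IsIso γ → γ.app U = 𝟙 _ → γ = 𝟙 G :=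
    fun γ hγ hγ' hγU =>
      (huniq C hC G G rfl).unique ⟨hγ, hγ', hγU⟩ ⟨inferInstance, inferInstance, rfl⟩
  let w := (F.isoCopyObj _ (F.updateObjIso U f)).hom
  obtain ⟨β, ⟨_, _, hβU⟩, -⟩ := huniq C hC (F.updateObj U f) G (F.updateObj_obj_self U f)
  have hwβ : (w ≫ β).app U = f.hom := by
    simp [w, Functor.updateObjIso_hom_self, hβU]
  refine ⟨w ≫ β, ⟨inferInstance, inferInstance, hwβ⟩, fun α ⟨_, _, hαU⟩ => ?_⟩
  exact NatTrans.eq_of_app_eq_of_isMonoidal_of_isIso U hG (hαU.trans hwβ.symm)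

theorem free_compact_closed_unique_monoidal_nat_iso
    {B : Type u₁} [Category.{v₁} B] [MonoidalCategory B] [SymmetricCategory B]
    (hB : ∀ X : B, ∃ Xd : B, Nonempty (ExactPairing X Xd)) (U : B)
    (hex : ∀ (C : Type u₂) [Category.{v₂} C] [MonoidalCategory C] [SymmetricCategory C],
      (∀ X : C, ∃ Xd : C, Nonempty (ExactPairing X Xd)) →
      ∀ c : C, ∃ (F : B ⥤ C) (_ : F.Braided), F.obj U = c)
    (huniq : ∀ (C : Type u₂) [Category.{v₂} C] [MonoidalCategory C] [SymmetricCategory C],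
      (∀ X : C, ∃ Xd : C, Nonempty (ExactPairing X Xd)) →
      ∀ (F G : B ⥤ C) [F.Braided] [G.Braided] (h : F.obj U = G.obj U),
        ∃! α : F ⟶ G, NatTrans.IsMonoidal α ∧ IsIso α ∧ α.app U = eqToHom h)
    (C : Type u₂) [Category.{v₂} C] [MonoidalCategory C] [SymmetricCategory C]
    (hC : ∀ X : C, ∃ Xd : C, Nonempty (ExactPairing X Xd))
    (F G : B ⥤ C) [F.Braided] [G.Braided] (f : F.obj U ≅ G.obj U) :
    ∃! α : F ⟶ G, NatTrans.IsMonoidal α ∧ IsIso α ∧ α.app U = f.hom :=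
  free_compact_closed_unique_monoidal_nat_iso_general U huniq C hC F G f
end
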